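/- Let n ∈ ℕ with n ≥ 3. Then for every integer m with |m| ≤ 2^{⌊4(n-3)/5⌋} there exists a bit string M of length n with π(M) = m; that is, every such integer is representable as an n-bit posit. -/

import Mathlib

/-- Integer value of a bit string read MSB → LSB. -/
def bitsToNat (L : List Bool) : ℕ :=
  L.foldl (fun a b => 2 * a + (if b then 1 else 0)) 0

/-- The posit decoding function `π`. A bit string (MSB → LSB, padded on the right with
zero "ghost bits" as needed) consists of a sign bit `S`, a run `R` of `k ≥ 1` identical
bits, a terminating bit (the negation of the run bits), two exponent bits and the
fraction bits. The all-zeros string encodes `0` (`some 0`), `10…0` encodes NaR (`none`),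
and every other string encodes `((1 - 3S) + f) · 2^e` with regime `r = k - 1` (run of
ones) or `r = -k` (run of zeros), exponent value `ê ∈ {0,1,2,3}`, fraction `f ∈ [0,1)`
and exponent `e = (-1)^S (4r + ê + S)`. -/
def positVal : List Bool → Option ℚ
  | [] => some 0
  | S :: rest =>
    if rest.all (fun b => b == false) then
      if S then none else some 0
    else
      let b0 : Bool := rest.getD 0 false
      let k : ℕ := (rest.takeWhile (fun b => b == b0)).length
      let r : ℤ := if b0 then (k : ℤ) - 1 else -(k : ℤ)
      let ehat : ℤ := 2 * (if rest.getD (k + 1) false then 1 else 0) +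
        (if rest.getD (k + 2) false then 1 else 0)
      let F : List Bool := rest.drop (k + 3)
      let f : ℚ := (bitsToNat F : ℚ) / 2 ^ F.length
      let s : ℤ := if S then 1 else 0
      let e : ℤ := (if S then -1 else 1) * (4 * r + ehat + s)
      some (((1 - 3 * (s : ℚ)) + f) * 2 ^ e)

/-! A positive integer `m` with `2^e ≤ m < 2^(e+1)` is the posit with a regime run of `e / 4 + 1`
ones, exponent bits `e % 4` and the `e` low-order bits of `m` as fraction; a negative one with
`2^e < |m| ≤ 2^(e+1)` is written as `(-2 + f) · 2^e` in the same way. Such a string has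
`e / 4 + 5 + e` bits, which fits into `n` bits as soon as `e < ⌊4(n-3)/5⌋`; the endpoint
`m = 2^⌊4(n-3)/5⌋` needs no fraction bits, and `0, ±1` are short strings padded with ghost bits. -/

lemma bitsToNat_append_singleton (F : List Bool) (b : Bool) :
    bitsToNat (F ++ [b]) = 2 * bitsToNat F + (if b then 1 else 0) := by
  simp [bitsToNat, List.foldl_append]

lemma exists_bitsToNat_eq {p J : ℕ} (hJ : J < 2 ^ p) :
    ∃ F : List Bool, F.length = p ∧ bitsToNat F = J := by
  induction p generalizing J with
  | zero => exact ⟨[], rfl, by simp_all [bitsToNat]⟩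
  | succ p ih =>
    obtain ⟨F, hlen, hF⟩ := ih (J := J / 2) (by rw [pow_succ] at hJ; omega)
    refine ⟨F ++ [decide (J % 2 = 1)], by simp [hlen], ?_⟩
    rw [bitsToNat_append_singleton, hF]
    split_ifs with h <;> simp_all <;> omega

lemma bitsToNat_replicate_false (j : ℕ) : bitsToNat (List.replicate j false) = 0 := by
  induction j with
  | zero => rfl
  | succ j ih => rw [List.replicate_succ', bitsToNat_append_singleton, ih]; rfl

lemma takeWhile_replicate_append (k : ℕ) (b : Bool) (L : List Bool) :
    (List.replicate k b ++ (!b) :: L).takeWhile (· == b) = List.replicate k b := by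
  induction k with
  | zero => simp
  | succ k ih => simp [List.replicate_succ, ih]

lemma positVal_cons_replicate_append (S b e₁ e₀ : Bool) {k : ℕ} (hk : 1 ≤ k) (F : List Bool) :
    positVal (S :: (List.replicate k b ++ (!b) :: e₁ :: e₀ :: F)) =
      some (((1 - 3 * (if S then 1 else 0 : ℚ)) + bitsToNat F / 2 ^ F.length) *
        2 ^ ((if S then -1 else 1) * (4 * (if b then (k : ℤ) - 1 else -k) +
          (2 * (if e₁ then 1 else 0) + (if e₀ then 1 else 0)) + (if S then 1 else 0)))) := by
  have hget0 : (List.replicate k b ++ (!b) :: e₁ :: e₀ :: F).getD 0 false = b := by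
    rw [List.getD_append _ _ _ _ (by simp; omega)]; simp [show 0 < k by omega]
  have hgetD (i : ℕ) : (List.replicate k b ++ (!b) :: e₁ :: e₀ :: F).getD (k + i) false
      = ((!b) :: e₁ :: e₀ :: F).getD i false := by
    rw [List.getD_append_right _ _ _ _ (by simp)]; simp
  have hdrop : (List.replicate k b ++ (!b) :: e₁ :: e₀ :: F).drop (k + 3) = F := by
    rw [List.drop_append]; simp
  have hall : (List.replicate k b ++ (!b) :: e₁ :: e₀ :: F).all (· == false) = false := by
    cases b <;> simp; omega
  simp only [positVal, hall, hget0, Bool.false_eq_true, if_false]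
  simp only [takeWhile_replicate_append, List.length_replicate, hgetD, hdrop]
  simp

/-- For `S = true` the run consists of zeros, so `r = -(e / 4 + 1)`, and the complemented exponent
bits give `ê = 3 - e % 4`; then `-(4r + ê + 1) = e`. -/
lemma positVal_encode (S : Bool) (e : ℕ) (F : List Bool) :
    positVal (S :: (List.replicate (e / 4 + 1) (!S) ++
        S :: (decide (2 ≤ e % 4) ^^ S) :: (decide (e % 2 = 1) ^^ S) :: F)) =
      some (((if S then -2 else 1 : ℚ) + bitsToNat F / 2 ^ F.length) * 2 ^ e) := by
  have h := positVal_cons_replicate_append S (!S) (decide (2 ≤ e % 4) ^^ S)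
    (decide (e % 2 = 1) ^^ S) (k := e / 4 + 1) (by omega) F
  rw [Bool.not_not] at h
  rw [h, ← zpow_natCast (2 : ℚ) e]
  have he4 : e % 4 < 4 := Nat.mod_lt _ (by norm_num)
  have he2 : e % 2 = e % 4 % 2 := (Nat.mod_mod_of_dvd e (by norm_num)).symm
  congr 2
  · cases S <;> norm_num
  · congr 1
    cases S <;> simp <;> split_ifs <;> omega

def PositRepresentable (n : ℕ) (x : ℚ) : Prop :=
  ∃ M : List Bool, M.length = n ∧ positVal M = some x

lemma positRepresentable_of_lt_two_pow (S : Bool) (e : ℕ) {p J : ℕ} (hJ : J < 2 ^ p) :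
    PositRepresentable (e / 4 + 5 + p) (((if S then -2 else 1) + J / 2 ^ p) * 2 ^ e) := by
  obtain ⟨F, rfl, rfl⟩ := exists_bitsToNat_eq hJ
  refine ⟨_, ?_, positVal_encode S e F⟩
  simp only [List.length_cons, List.length_append, List.length_replicate]
  omega

lemma positRepresentable_mul_two_pow (S : Bool) {n e : ℕ} (hn : e / 4 + 5 ≤ n) :
    PositRepresentable n ((if S then -2 else 1) * 2 ^ e) := by
  obtain ⟨p, rfl⟩ : ∃ p, n = e / 4 + 5 + p := ⟨n - (e / 4 + 5), by omega⟩
  simpa using positRepresentable_of_lt_two_pow S e (J := 0) (Nat.two_pow_pos p)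

lemma positRepresentable_mul_two_pow_add (S : Bool) {n e j : ℕ} (hj : j < 2 ^ e)
    (hn : e / 4 + 5 + e ≤ n) :
    PositRepresentable n ((if S then -2 else 1) * 2 ^ e + j) := by
  obtain ⟨p, rfl⟩ : ∃ p, n = e / 4 + 5 + p := ⟨n - (e / 4 + 5), by omega⟩
  have hp : 2 ^ p = 2 ^ (p - e) * 2 ^ e := by rw [← pow_add, Nat.sub_add_cancel (by omega)]
  have hJ : j * 2 ^ (p - e) < 2 ^ p := by
    rw [hp, mul_comm (2 ^ _)]
    exact Nat.mul_lt_mul_of_pos_right hj (Nat.two_pow_pos _)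
  convert positRepresentable_of_lt_two_pow S e hJ using 1
  rw [show (2 : ℚ) ^ p = 2 ^ (p - e) * 2 ^ e by exact_mod_cast hp]
  push_cast
  field_simp

lemma positVal_replicate_false (j : ℕ) : positVal (List.replicate (j + 1) false) = some 0 := by
  simp [positVal, List.replicate_succ]

/-- `-1 = -2 · 2⁻¹` is the one integer needing a negative exponent: regime `0`, ghost exponent
bits `0` and sign `1` give `e = -1`. -/
lemma positVal_cons_true_replicate_false (S : Bool) (j : ℕ) :
    positVal (S :: true :: List.replicate j false) = some (if S then -1 else 1) := by
  have hF := bitsToNat_replicate_false (j - 3)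
  cases S <;> norm_num [positVal, hF]

lemma positRepresentable_of_abs_le_one {n : ℕ} (hn : 2 ≤ n) {m : ℤ} (hm : |m| ≤ 1) :
    PositRepresentable n m := by
  obtain ⟨j, rfl⟩ : ∃ j, n = j + 2 := ⟨n - 2, by omega⟩
  rcases show m = -1 ∨ m = 0 ∨ m = 1 by rw [abs_le] at hm; omega with rfl | rfl | rfl
  · refine ⟨true :: true :: List.replicate j false, by simp, ?_⟩
    simpa using positVal_cons_true_replicate_false true j
  · exact ⟨List.replicate (j + 2) false, List.length_replicate .., by
      simpa using positVal_replicate_false (j + 1)⟩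
  · refine ⟨false :: true :: List.replicate j false, by simp, ?_⟩
    simpa using positVal_cons_true_replicate_false false j

lemma exists_eq_two_pow_add {a : ℕ} (ha : a ≠ 0) : ∃ e j : ℕ, j < 2 ^ e ∧ a = 2 ^ e + j := by
  have hle := Nat.log2_self_le ha
  have hlt := Nat.lt_log2_self (n := a)
  rw [pow_succ] at hlt
  exact ⟨Nat.log2 a, a - 2 ^ Nat.log2 a, by omega, by omega⟩

lemma exists_eq_mul_two_pow_add {m : ℤ} {t : ℕ} (hm : 1 < |m|) (hmt : |m| ≤ 2 ^ t) :
    ∃ (S : Bool) (e j : ℕ), j < 2 ^ e ∧ m = (if S then -2 else 1) * 2 ^ e + j ∧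
      (j = 0 ∧ e ≤ t ∨ e < t) := by
  obtain ⟨a, rfl | rfl⟩ := Int.eq_nat_or_neg m
  · rw [Nat.abs_cast] at hm hmt
    norm_cast at hm hmt
    obtain ⟨e, j, hj, rfl⟩ := exists_eq_two_pow_add (a := a) (by omega)
    refine ⟨false, e, j, hj, by simp, ?_⟩
    rcases Nat.eq_zero_or_pos j with rfl | hj0
    · exact .inl ⟨rfl, (Nat.pow_le_pow_iff_right (by norm_num : 1 < 2)).1 (by omega)⟩
    · exact .inr ((Nat.pow_lt_pow_iff_right (by norm_num : 1 < 2)).1 (by omega))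
  · rw [abs_neg, Nat.abs_cast] at hm hmt
    norm_cast at hm hmt
    obtain ⟨e, j, hj, ha⟩ := exists_eq_two_pow_add (a := a - 1) (by omega)
    have he := Nat.two_pow_pos e
    have hea : 2 ^ e < a := by omega
    refine ⟨true, e, 2 ^ e - 1 - j, by omega, ?_,
      .inr ((Nat.pow_lt_pow_iff_right (by norm_num : 1 < 2)).1 (hea.trans_le hmt))⟩
    have ha' : a = 2 ^ e + j + 1 := by omega
    rw [if_pos rfl, Nat.sub_sub, Nat.cast_sub (by omega), ha']
    push_cast
    ring

/-- **Consecutive posit integers (representability).**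
For `n ≥ 3`, every integer `m` with `|m| ≤ 2^⌊4(n-3)/5⌋` is representable as an
`n`-bit posit. -/
theorem posit_consecutive_integers (n : ℕ) (hn : 3 ≤ n) (m : ℤ)
    (hm : |m| ≤ 2 ^ (4 * (n - 3) / 5)) :
    ∃ M : List Bool, M.length = n ∧ positVal M = some (m : ℚ) := by
  show PositRepresentable n m
  have h5 : 5 * (4 * (n - 3) / 5) ≤ 4 * (n - 3) := Nat.mul_div_le _ _
  generalize 4 * (n - 3) / 5 = t at hm h5
  rcases le_or_gt |m| 1 with hm1 | hm1
  · exact positRepresentable_of_abs_le_one (by omega) hm1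
  have ht : t ≠ 0 := fun ht => by rw [ht, pow_zero] at hm; linarith
  obtain ⟨S, e, j, hj, rfl, he⟩ := exists_eq_mul_two_pow_add hm1 hm
  push_cast
  rcases he with ⟨rfl, he⟩ | he
  · simpa using positRepresentable_mul_two_pow S (n := n) (e := e) (by omega)
  · exact positRepresentable_mul_two_pow_add S hj (by omega)
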